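/- arXiv:1512.06259 — 2 statements merged into one kernel-verified Lean document; each statement's English description precedes it below -/
import Mathlib

section
/- Let (⊠,T) ∈ LR(α,□,β,γ) and let T_j denote the punctured tableau obtained after the j-th move of the local evacuation-shuffle algorithm applied to (⊠,T). Then at every stage, omitting the square ⊠, the rows of T_j are weakly increasing, the columns of T_j are strictly increasing, and the reading word of T_j is ballot. -/
/-
Common combinatorial framework for the paper
"Monodromy and K-theory of Schubert curves via generalized jeu de taquin"
(Gillespie–Levinson).

Cells are pairs (row, column), 0-indexed, with row 0 the top row (English
convention).  A skew tableau is modelled as a `Filling`, i.e. a function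
`Cell → Option ℕ`; `none` means the cell is not in the (filled part of the)
shape.  A punctured tableau is a filling together with a distinguished empty
cell `box` (the ⊠).
-/

namespace SC

/-- A cell `(row, column)` of the plane; row `0` is the top row. -/
abbrev Cell : Type := ℕ × ℕ

/-- A partial filling of the cells by natural-number entries. -/
abbrev Filling : Type := Cell → Option ℕ

/-- `readBefore p q` : the cell `p` comes strictly before `q` in reading order
(rows bottom to top, left to right within each row). -/
def readBefore (p q : Cell) : Prop :=
  q.1 < p.1 ∨ (p.1 = q.1 ∧ p.2 < q.2)

/-- Two cells share an edge. -/
def Adj (p q : Cell) : Prop :=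
  (p.1 = q.1 ∧ (p.2 + 1 = q.2 ∨ q.2 + 1 = p.2)) ∨
    (p.2 = q.2 ∧ (p.1 + 1 = q.1 ∨ q.1 + 1 = p.1))

/-- A partition contained in the `k × m` rectangle (parts indexed from `0`). -/
structure Partition (k m : ℕ) where
  part : ℕ → ℕ
  antitone' : ∀ ⦃i j : ℕ⦄, i ≤ j → part j ≤ part i
  le_width : ∀ i, part i ≤ m
  eq_zero : ∀ i, k ≤ i → part i = 0

/-- The size `|λ|` of a partition. -/
def Partition.size {k m : ℕ} (l : Partition k m) : ℕ :=
  ∑ i ∈ Finset.range k, l.part i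

/-- The number `ℓ(λ)` of nonzero parts. -/
def Partition.length {k m : ℕ} (l : Partition k m) : ℕ :=
  ((Finset.range k).filter fun i => l.part i ≠ 0).card

/-- The skew shape `γᶜ/α` inside the `k × m` rectangle: row `i` of `γᶜ` has
length `m - γ (k-1-i)`. -/
def totalShape (k m : ℕ) (a g : Partition k m) : Set Cell :=
  {p | p.1 < k ∧ a.part p.1 ≤ p.2 ∧ p.2 < m - g.part (k - 1 - p.1)}

/-- The set of filled cells of a filling. -/
def shapeOf (T : Filling) : Set Cell := {p | T p ≠ none}

/-- Rows are weakly increasing (on filled cells). -/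
def RowsWeak (T : Filling) : Prop :=
  ∀ r c₁ c₂ v₁ v₂, c₁ ≤ c₂ → T (r, c₁) = some v₁ → T (r, c₂) = some v₂ → v₁ ≤ v₂

/-- Columns are strictly increasing (on filled cells). -/
def ColsStrict (T : Filling) : Prop :=
  ∀ r₁ r₂ c v₁ v₂, r₁ < r₂ → T (r₁, c) = some v₁ → T (r₂, c) = some v₂ → v₁ < v₂

/-- All entries are at least `1`. -/
def PosEntries (T : Filling) : Prop := ∀ p v, T p = some v → 1 ≤ v

open scoped Classical in
/-- The number of cells of the `k × m` rectangle satisfying `P` and carrying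
the entry `v`. -/
noncomputable def countP (k m : ℕ) (T : Filling) (P : Cell → Prop) (v : ℕ) : ℕ :=
  ((Finset.range k ×ˢ Finset.range m).filter fun p => P p ∧ T p = some v).card

/-- The reading word is ballot: every weak suffix contains, for each `i ≥ 1`,
at least as many `i`'s as `(i+1)`'s. -/
def Ballot (k m : ℕ) (T : Filling) : Prop :=
  ∀ (p : Cell) (i : ℕ), 1 ≤ i →
    countP k m T (fun q => q = p ∨ readBefore p q) (i + 1) ≤
      countP k m T (fun q => q = p ∨ readBefore p q) i

/-- The filling has content `β`: the entry `j+1` occurs exactly `β j` times. -/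
def HasContent (k m : ℕ) (b : Partition k m) (T : Filling) : Prop :=
  ∀ j : ℕ, countP k m T (fun _ => True) (j + 1) = b.part j

/-- A punctured tableau: a filling together with a distinguished empty cell
(the `⊠`). -/
structure PState where
  box : Cell
  T : Filling

/-- Membership in `LR(α, □, β, γ)`: `T` is a Littlewood–Richardson skew tableau
of content `β`, `⊠` is an inner co-corner of `T`, and `⊠ ⊔ T` has shape `γᶜ/α`.
(The conditions on `(box.1, box.2 - 1)` and `(box.1 - 1, box.2)` say that the
west and north neighbours of the box are not in the shape; note that if
`box.2 = 0` resp. `box.1 = 0` the displayed cell is the box itself, which is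
empty, so the condition is automatic, as it should be.) -/
def MemLR1 (k m : ℕ) (a b g : Partition k m) (x : PState) : Prop :=
  x.box ∈ totalShape k m a g ∧
  (∀ p : Cell, (x.T p).isSome ↔ (p ∈ totalShape k m a g ∧ p ≠ x.box)) ∧
  RowsWeak x.T ∧ ColsStrict x.T ∧ PosEntries x.T ∧
  Ballot k m x.T ∧ HasContent k m b x.T ∧
  (x.box.1, x.box.2 - 1) ∉ shapeOf x.T ∧ (x.box.1 - 1, x.box.2) ∉ shapeOf x.T

/-- Membership in `LR(α, β, □, γ)`: as in `MemLR1` but the box `⊠` extends `T`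
outward (its east and south neighbours are not in the shape). -/
def MemLR2 (k m : ℕ) (a b g : Partition k m) (x : PState) : Prop :=
  x.box ∈ totalShape k m a g ∧
  (∀ p : Cell, (x.T p).isSome ↔ (p ∈ totalShape k m a g ∧ p ≠ x.box)) ∧
  RowsWeak x.T ∧ ColsStrict x.T ∧ PosEntries x.T ∧
  Ballot k m x.T ∧ HasContent k m b x.T ∧
  (x.box.1, x.box.2 + 1) ∉ shapeOf x.T ∧ (x.box.1 + 1, x.box.2) ∉ shapeOf x.T

/-- Exchange the box with the cell `q`, which receives the box while the old
box cell receives the entry `v`. -/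
def swapState (x : PState) (q : Cell) (v : ℕ) : PState :=
  ⟨q, Function.update (Function.update x.T q none) x.box (some v)⟩

/-! ### The local evacuation-shuffle -/

/-- Phase 1 applies at value `i` iff the box does not precede all of the `i`'s
in reading order. -/
def phase1Cond (i : ℕ) (x : PState) : Prop :=
  ∃ q, x.T q = some i ∧ readBefore q x.box

/-- `q` is the nearest `i` strictly prior to the box in reading order. -/
def Phase1Move (i : ℕ) (x : PState) (q : Cell) : Prop :=
  x.T q = some i ∧ readBefore q x.box ∧
    ∀ q', x.T q' = some i → readBefore q' x.box → q' = q ∨ readBefore q' q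

/-- Phase 2 continues at value `i` iff the suffix of the reading word strictly
after the box contains strictly more `i`'s than `(i+1)`'s. -/
def phase2Cond (k m i : ℕ) (x : PState) : Prop :=
  countP k m x.T (fun q => readBefore x.box q) (i + 1) <
    countP k m x.T (fun q => readBefore x.box q) i

/-- `q` is the nearest `i` strictly after the box in reading order. -/
def Phase2Move (i : ℕ) (x : PState) (q : Cell) : Prop :=
  x.T q = some i ∧ readBefore x.box q ∧
    ∀ q', x.T q' = some i → readBefore x.box q' → q' = q ∨ readBefore q q'

/-- One step of the local evacuation-shuffle algorithm, on states
`(i, phase, x)` where `phase = false` is Phase 1 and `phase = true` is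
Phase 2, and `lb = ℓ(β)`.  The algorithm starts at `(1, false, x)` and is
stuck exactly at the states with `i = lb + 1`. -/
inductive Step (k m lb : ℕ) : ℕ × Bool × PState → ℕ × Bool × PState → Prop
  | p1 {i : ℕ} {x : PState} {q : Cell} (hi : i ≤ lb) (h : Phase1Move i x q) :
      Step k m lb (i, false, x) (i + 1, false, swapState x q i)
  | p1to2 {i : ℕ} {x : PState} (hi : i ≤ lb) (h : ¬ phase1Cond i x) :
      Step k m lb (i, false, x) (i, true, x)
  | p2 {i : ℕ} {x : PState} {q : Cell} (hi : i ≤ lb) (hc : phase2Cond k m i x)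
      (h : Phase2Move i x q) :
      Step k m lb (i, true, x) (i, true, swapState x q i)
  | p2inc {i : ℕ} {x : PState} (hi : i ≤ lb) (hc : ¬ phase2Cond k m i x) :
      Step k m lb (i, true, x) (i + 1, true, x)

/-- The complete run of the local evacuation-shuffle:
`local-esh (x) = y`. -/
def LocalEshRun (k m lb : ℕ) (x y : PState) : Prop :=
  ∃ bl : Bool, Relation.ReflTransGen (Step k m lb) (1, false, x) (lb + 1, bl, y)

/-! ### Jeu de taquin slides -/

/-- One step of an inward jeu de taquin slide: the empty box moves north or
west, the displaced entry moves south-east into the old box.  Ties between the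
north and west entries are broken by moving the north entry. -/
inductive InStep : PState → PState → Prop
  | north {x : PState} {r c v : ℕ} (hb : x.box = (r + 1, c)) (hv : x.T (r, c) = some v)
      (hw : ∀ w, x.T (r + 1, c - 1) = some w → w ≤ v) :
      InStep x (swapState x (r, c) v)
  | west {x : PState} {r c v : ℕ} (hb : x.box = (r, c + 1)) (hv : x.T (r, c) = some v)
      (hn : ∀ w, x.T (r - 1, c + 1) = some w → w < v) :
      InStep x (swapState x (r, c) v)

/-- One step of an outward jeu de taquin slide: the empty box moves south or
east, the displaced entry moves north-west into the old box.  Ties between the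
south and east entries are broken by moving the south entry. -/
inductive OutStep : PState → PState → Prop
  | south {x : PState} {r c v : ℕ} (hb : x.box = (r, c)) (hv : x.T (r + 1, c) = some v)
      (he : ∀ w, x.T (r, c + 1) = some w → v ≤ w) :
      OutStep x (swapState x (r + 1, c) v)
  | east {x : PState} {r c v : ℕ} (hb : x.box = (r, c)) (hv : x.T (r, c + 1) = some v)
      (hs : ∀ w, x.T (r + 1, c) = some w → v < w) :
      OutStep x (swapState x (r, c + 1) v)

/-- Run a step relation to completion. -/
def RunToEnd (R : PState → PState → Prop) (x y : PState) : Prop :=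
  Relation.ReflTransGen R x y ∧ ∀ z, ¬ R y z

/-- The shuffle `sh : LR(α,β,□,γ) → LR(α,□,β,γ)`: the complete inward jeu de
taquin slide of `T` into the box. -/
def ShRun (x y : PState) : Prop := RunToEnd InStep x y

/-! ### Rectification, promotion, and the evacuation-shuffle -/

/-- `S` is (the set of cells of) a skew shape `λ/μ`. -/
def IsSkewShape (S : Set Cell) : Prop :=
  ∃ lam mu : ℕ → ℕ,
    (∀ ⦃i j : ℕ⦄, i ≤ j → lam j ≤ lam i) ∧ (∀ ⦃i j : ℕ⦄, i ≤ j → mu j ≤ mu i) ∧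
    (∀ i, mu i ≤ lam i) ∧ ∀ p : Cell, p ∈ S ↔ mu p.1 ≤ p.2 ∧ p.2 < lam p.1

/-- `c` is an inner co-corner of the shape `S` (an addable corner of the inner
partition). -/
def InnerAddable (S : Set Cell) (c : Cell) : Prop :=
  c ∉ S ∧ IsSkewShape (insert c S) ∧ (c.1, c.2 - 1) ∉ S ∧ (c.1 - 1, c.2) ∉ S

/-- One rectification move on a filling `U`: slide the hole inward from an
inner co-corner `c` through `U` until it exits; `d` records the vacated outer
cell and `V` is the resulting filling. -/
def RectMove (U V : Filling) (d : Cell) : Prop :=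
  ∃ c : Cell, InnerAddable (shapeOf U) c ∧ RunToEnd OutStep ⟨c, U⟩ ⟨d, V⟩

/-- A sequence of rectification moves, recording the vacated cells. -/
inductive RectSeq : Filling → List Cell → Filling → Prop
  | nil (U : Filling) : RectSeq U [] U
  | cons {U V W : Filling} {d : Cell} {ds : List Cell} :
      RectMove U V d → RectSeq V ds W → RectSeq U (d :: ds) W

/-- One un-rectification move: slide the hole outward-to-inward starting at the
recorded cell `d` (this is the inverse of the rectification move that vacated
`d`). -/
def UnRectMove (V W : Filling) (d : Cell) : Prop :=
  d ∉ shapeOf V ∧ ∃ c : Cell, RunToEnd InStep ⟨d, V⟩ ⟨c, W⟩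

/-- A sequence of un-rectification moves along a list of recorded cells. -/
inductive UnRectSeq : Filling → List Cell → Filling → Prop
  | nil (U : Filling) : UnRectSeq U [] U
  | cons {U V W : Filling} {d : Cell} {ds : List Cell} :
      UnRectMove U V d → UnRectSeq V ds W → UnRectSeq U (d :: ds) W

/-- `S` is a straight (non-skew) shape. -/
def IsStraight (S : Set Cell) : Prop :=
  ∀ p ∈ S, ∀ q : Cell, q.1 ≤ p.1 → q.2 ≤ p.2 → q ∈ S

/-- Jeu de taquin promotion step on a rectified tableau containing the entry
`0`: delete the `0`, rectify the remainder (one outward slide of the hole),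
and label the vacated outer corner with `lb + 1`. -/
def PromMove (lb : ℕ) (R R' : Filling) : Prop :=
  ∃ (p d : Cell) (V : Filling), R p = some 0 ∧
    RunToEnd OutStep ⟨p, Function.update R p none⟩ ⟨d, V⟩ ∧
    R' = Function.update V d (some (lb + 1))

/-- The evacuation-shuffle `esh : LR(α,□,β,γ) → LR(α,β,□,γ)`: treat `⊠` as the
entry `0`, rectify recording the order, promote (delete the `0`, rectify the
remainder, label the vacated corner `ℓ(β)+1`), un-rectify along the recorded
order reversed, and turn the entry `ℓ(β)+1` back into `⊠`. -/
def EshRel (lb : ℕ) (x y : PState) : Prop :=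
  ∃ (ds : List Cell) (R R' W : Filling),
    RectSeq (Function.update x.T x.box (some 0)) ds R ∧
    IsStraight (shapeOf R) ∧
    PromMove lb R R' ∧
    UnRectSeq R' ds.reverse W ∧
    W y.box = some (lb + 1) ∧ y.T = Function.update W y.box none

/-- The monodromy operator `ω = sh ∘ local-esh` (as a relation). -/
def OmegaRel (k m lb : ℕ) (x y : PState) : Prop :=
  ∃ z : PState, LocalEshRun k m lb x z ∧ ShRun z y

/-! ### Genomic tableaux -/

/-- `(U, {b₁, b₂})` is a ballot genomic tableau of shape `γᶜ/α` and K-theoretic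
content `β`, with repeated (extra) entry `i`; here `b₁` comes before `b₂` in
reading order. -/
def IsGenomic (k m : ℕ) (a b g : Partition k m) (i : ℕ)
    (U : Filling) (b₁ b₂ : Cell) : Prop :=
  1 ≤ i ∧
  (∀ p : Cell, (U p).isSome ↔ p ∈ totalShape k m a g) ∧
  RowsWeak U ∧ ColsStrict U ∧ PosEntries U ∧
  (∀ j : ℕ, countP k m U (fun _ => True) (j + 1)
      = b.part j + if j + 1 = i then 1 else 0) ∧
  readBefore b₁ b₂ ∧ ¬ Adj b₁ b₂ ∧ U b₁ = some i ∧ U b₂ = some i ∧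
  (∀ q : Cell, U q = some i → readBefore b₁ q → readBefore q b₂ → False) ∧
  Ballot k m (Function.update U b₁ none) ∧
  Ballot k m (Function.update U b₂ none)

/-- `K(γᶜ/α; β)(i)`: ballot genomic tableaux with repeated entry `i`. -/
def KSet (k m : ℕ) (a b g : Partition k m) (i : ℕ) : Set (Filling × Cell × Cell) :=
  {u | IsGenomic k m a b g i u.1 u.2.1 u.2.2}

/-- `K(γᶜ/α; β)`: all ballot genomic tableaux of shape `γᶜ/α` and K-theoretic
content `β`. -/
def KAll (k m : ℕ) (a b g : Partition k m) : Set (Filling × Cell × Cell) :=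
  ⋃ i : ℕ, KSet k m a b g i

/-! ### Permutation utilities -/

/-- The reflection length of a permutation: the least number of transpositions
whose product is `g`. -/
noncomputable def rlength {X : Type*} (g : Equiv.Perm X) : ℕ :=
  letI := Classical.decEq X
  sInf {n : ℕ | ∃ l : List (Equiv.Perm X), l.length = n ∧
    (∀ τ ∈ l, ∃ x y : X, x ≠ y ∧ τ = Equiv.swap x y) ∧ l.prod = g}

/-- The set of orbits of a permutation. -/
def orbitsOf {X : Type*} (g : Equiv.Perm X) : Set (Set X) :=
  {s | ∃ a : X, s = {b | g.SameCycle a b}}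

/-- The number of orbits of a permutation. -/
noncomputable def orbitCount {X : Type*} (g : Equiv.Perm X) : ℕ :=
  (orbitsOf g).ncard

/-! ### The sets `Xᵢ` and the factors `ℓᵢ`, `sᵢ` -/

/-- The box sits between the `(i-1)`-st and `i`-th horizontal strips:
giving the box any value strictly between `i - 1` and `i` would keep rows
weakly increasing and columns strictly increasing. -/
def BoxBetween (i : ℕ) (x : PState) : Prop :=
  (∀ c v, c < x.box.2 → x.T (x.box.1, c) = some v → v ≤ i - 1) ∧
  (∀ c v, x.box.2 < c → x.T (x.box.1, c) = some v → i ≤ v) ∧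
  (∀ r v, r < x.box.1 → x.T (r, x.box.2) = some v → v ≤ i - 1) ∧
  (∀ r v, x.box.1 < r → x.T (r, x.box.2) = some v → i ≤ v)

/-- The set `Xᵢ` of punctured tableaux of content `β` and total shape `γᶜ/α`
with ballot reading word, semistandard rows and columns (omitting `⊠`), in
which `⊠` lies between the `(i-1)`-st and `i`-th horizontal strips. -/
def XSet (k m : ℕ) (a b g : Partition k m) (i : ℕ) : Set PState :=
  {x | x.box ∈ totalShape k m a g ∧
    (∀ p : Cell, (x.T p).isSome ↔ (p ∈ totalShape k m a g ∧ p ≠ x.box)) ∧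
    RowsWeak x.T ∧ ColsStrict x.T ∧ PosEntries x.T ∧
    Ballot k m x.T ∧ HasContent k m b x.T ∧ BoxBetween i x}

/-- One Phase 2 move at value `i` (as a standalone step relation). -/
def P2Step (k m i : ℕ) (x y : PState) : Prop :=
  phase2Cond k m i x ∧ ∃ q, Phase2Move i x q ∧ y = swapState x q i

/-- The operator `ℓᵢ : Xᵢ → Xᵢ₊₁`: the composition of the steps of
`local-esh` exchanging `⊠` with entries equal to `i` (a single Phase 1 move
if some `i` precedes the box, otherwise the Phase 2 loop at value `i`). -/
def LiRel (k m i : ℕ) (x y : PState) : Prop :=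
  (∃ q, Phase1Move i x q ∧ y = swapState x q i) ∨
  (¬ phase1Cond i x ∧ Relation.ReflTransGen (P2Step k m i) x y ∧ ¬ phase2Cond k m i y)

/-- One step of the inward jeu de taquin shuffle in which the box passes an
entry equal to `i`. -/
def SiStep (i : ℕ) (x y : PState) : Prop := InStep x y ∧ x.T y.box = some i

/-- The operator `sᵢ : Xᵢ₊₁ → Xᵢ`: the inward jeu de taquin shuffle of `⊠`
past the entries equal to `i`. -/
def SiRun (i : ℕ) (x y : PState) : Prop :=
  Relation.ReflTransGen (SiStep i) x y ∧ ∀ z, ¬ SiStep i y z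

/-- `DownTo j` is the composite `s₁ ∘ s₂ ∘ ⋯ ∘ s_j : X_{j+1} → X₁`. -/
inductive DownTo : ℕ → PState → PState → Prop
  | zero (x : PState) : DownTo 0 x x
  | succ {j : ℕ} {x y z : PState} : SiRun (j + 1) x y → DownTo j y z → DownTo (j + 1) x z

/-! Along the run we keep an explicit invariant. Besides the Littlewood–Richardson conditions
away from `⊠`, it records where `⊠` sits among the horizontal strips: in Phase 1 at value `i`,
the entries left of or above `⊠` are `< i` and those right of or below it are `≥ i`; in Phase 2
at value `i`, the entries to the left are `≤ i`, to the right `≥ i`, above `< i` and below `> i`.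
Exchanging `⊠` with the nearest `i` then keeps rows and columns semistandard.

A move only relocates one `i` in the reading word, so ballotness can only fail for the pair
`(i - 1, i)` in Phase 1 and `(i, i + 1)` in Phase 2, and only for suffixes starting between the
old and new positions of `⊠`. There it is rescued by a strict inequality in the suffix after `⊠`:
the Phase 2 loop condition, resp. the inequality created by the previous Phase 1 move (the extra
clause of the Phase 1 invariant).

When the Phase 2 loop at `i` stops, the suffix after `⊠` is balanced in `i, i + 1`. This rules
out an `i + 1` directly below `⊠`: every `i` left of `⊠` in its row sits above an `i + 1`, so the
suffix starting at the leftmost `i + 1` of the next row would have more `i + 1`'s than `i`'s. -/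

lemma readBefore_trans {p q r : Cell} (h₁ : readBefore p q) (h₂ : readBefore q r) :
    readBefore p r := by
  unfold readBefore at *; omega

lemma readBefore_irrefl (p : Cell) : ¬ readBefore p p := by
  unfold readBefore; omega

lemma readBefore_trichotomy (p q : Cell) : p = q ∨ readBefore p q ∨ readBefore q p := by
  obtain ⟨a, b⟩ := p; obtain ⟨c, d⟩ := q
  unfold readBefore; simp only [Prod.mk.injEq]; omega

lemma readBefore_iff_succ (p u : Cell) :
    readBefore p u ↔ u = (p.1, p.2 + 1) ∨ readBefore (p.1, p.2 + 1) u := by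
  obtain ⟨a, b⟩ := p; obtain ⟨c, d⟩ := u
  unfold readBefore; simp only [Prod.mk.injEq]; omega

section Counting

open Classical

variable {k m : ℕ} {T : Filling} {P Q R : Cell → Prop} {v : ℕ}

lemma countP_eq_sum (k m : ℕ) (T : Filling) (P : Cell → Prop) (v : ℕ) :
    countP k m T P v =
      ∑ u ∈ Finset.range k ×ˢ Finset.range m, if P u ∧ T u = some v then 1 else 0 := by
  rw [countP, Finset.card_filter]

lemma countP_mono (h : ∀ p, T p = some v → P p → Q p) :
    countP k m T P v ≤ countP k m T Q v := by
  rw [countP_eq_sum, countP_eq_sum]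
  refine Finset.sum_le_sum fun u _ => ?_
  by_cases hu : T u = some v <;> by_cases hP : P u <;> simp [hu, hP, h u]

lemma countP_congr (h : ∀ p, T p = some v → (P p ↔ Q p)) :
    countP k m T P v = countP k m T Q v :=
  le_antisymm (countP_mono fun p hp => (h p hp).1) (countP_mono fun p hp => (h p hp).2)

lemma countP_eq_zero (h : ∀ p, T p = some v → ¬ P p) : countP k m T P v = 0 := by
  rw [countP_eq_sum]
  exact Finset.sum_eq_zero fun u _ => if_neg fun hu => h u hu.2 hu.1

lemma countP_split (h : ∀ p, T p = some v → (P p ↔ Q p ∨ R p))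
    (hdisj : ∀ p, T p = some v → Q p → ¬ R p) :
    countP k m T P v = countP k m T Q v + countP k m T R v := by
  simp only [countP_eq_sum, ← Finset.sum_add_distrib]
  refine Finset.sum_congr rfl fun u _ => ?_
  by_cases hu : T u = some v
  · by_cases hQ : Q u <;> simp [hu, h u hu, hQ, hdisj u hu]
  · simp [hu]

lemma countP_singleton {d : Cell} (hd : T d = some v) (hk : d.1 < k) (hm : d.2 < m) :
    countP k m T (· = d) v = 1 := by
  rw [countP, Finset.card_eq_one]
  refine ⟨d, Finset.ext fun p => ?_⟩
  simp only [Finset.mem_filter, Finset.mem_product, Finset.mem_range, Finset.mem_singleton]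
  constructor
  · exact fun h => h.2.1
  · rintro rfl; exact ⟨⟨hk, hm⟩, rfl, hd⟩

lemma countP_le_of_injOn {w : ℕ} (φ : Cell → Cell)
    (hmaps : ∀ p, P p → T p = some v →
      Q (φ p) ∧ T (φ p) = some w ∧ (φ p).1 < k ∧ (φ p).2 < m)
    (hinj : ∀ p₁ p₂, P p₁ → P p₂ → φ p₁ = φ p₂ → p₁ = p₂) :
    countP k m T P v ≤ countP k m T Q w := by
  refine Finset.card_le_card_of_injOn φ (fun p hp => ?_)
    fun p₁ h₁ p₂ h₂ => hinj p₁ p₂ ?_ ?_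
  · simp only [Finset.coe_filter, Finset.mem_product, Finset.mem_range, Set.mem_ofPred_eq]
      at hp ⊢
    obtain ⟨hQ, hw, hk, hm⟩ := hmaps p hp.2.1 hp.2.2
    exact ⟨⟨hk, hm⟩, hQ, hw⟩
  · simp only [Finset.coe_filter, Set.mem_ofPred_eq] at h₁; exact h₁.2.1
  · simp only [Finset.coe_filter, Set.mem_ofPred_eq] at h₂; exact h₂.2.1

lemma countP_update {p : Cell} (hk : p.1 < k) (hm : p.2 < m) (o : Option ℕ) :
    countP k m (Function.update T p o) P v + (if P p ∧ T p = some v then 1 else 0) =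
      countP k m T P v + (if P p ∧ o = some v then 1 else 0) := by
  have hp : p ∈ Finset.range k ×ˢ Finset.range m := by simp [hk, hm]
  simp only [countP_eq_sum, ← Finset.add_sum_erase _ _ hp, Function.update_self]
  have hrest : ∀ u ∈ (Finset.range k ×ˢ Finset.range m).erase p,
      Function.update T p o u = T u := fun u hu =>
    Function.update_of_ne (Finset.ne_of_mem_erase hu) _ _
  rw [Finset.sum_congr rfl fun u hu => by rw [hrest u hu]]
  omega

lemma countP_readBefore_eq_suffix (k m : ℕ) (T : Filling) (p : Cell) (v : ℕ) :
    countP k m T (fun u => readBefore p u) v =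
      countP k m T (fun u => u = (p.1, p.2 + 1) ∨ readBefore (p.1, p.2 + 1) u) v :=
  countP_congr fun u _ => readBefore_iff_succ p u

lemma countP_suffix_below_eq {r c : ℕ} (hbox : T (r, c) = none) (ct v : ℕ) :
    countP k m T (fun u => u = (r + 1, ct) ∨ readBefore (r + 1, ct) u) v =
      countP k m T (fun u => u.1 = r + 1 ∧ ct ≤ u.2) v +
        (countP k m T (fun u => u.1 = r ∧ u.2 < c) v +
          countP k m T (fun u => readBefore (r, c) u) v) := by
  rw [← countP_split (P := fun u => (u.1 = r ∧ u.2 < c) ∨ readBefore (r, c) u)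
    (fun _ _ => Iff.rfl) fun ⟨y, z⟩ _ h₁ h₂ => by
      simp only [readBefore] at h₁ h₂; omega]
  refine countP_split (fun ⟨y, z⟩ hu => ?_) fun ⟨y, z⟩ _ h₁ h₂ => ?_
  · have : (y, z) ≠ (r, c) := by rintro ⟨⟩; simp [hbox] at hu
    simp only [readBefore, Prod.mk.injEq, ne_eq] at this ⊢; omega
  · simp only [readBefore] at h₁ h₂; omega

end Counting

section Ballot

variable {k m : ℕ} {T : Filling} {i : ℕ}

lemma Ballot.countP_readBefore_le (hbal : Ballot k m T) (p : Cell) (hi : 1 ≤ i) :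
    countP k m T (fun u => readBefore p u) (i + 1) ≤
      countP k m T (fun u => readBefore p u) i := by
  simpa only [countP_readBefore_eq_suffix] using hbal (p.1, p.2 + 1) i hi

lemma Ballot.countP_suffix_lt (hbal : Ballot k m T) {p : Cell} (hp : T p = some i)
    (hk : p.1 < k) (hm : p.2 < m) (hi : 1 ≤ i) :
    countP k m T (fun u => u = p ∨ readBefore p u) (i + 1) <
      countP k m T (fun u => u = p ∨ readBefore p u) i := by
  have hsplit : ∀ v, countP k m T (fun u => u = p ∨ readBefore p u) v =
      countP k m T (· = p) v + countP k m T (fun u => readBefore p u) v := fun v =>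
    countP_split (fun _ _ => Iff.rfl) fun u _ hu => hu ▸ readBefore_irrefl u
  have hself : countP k m T (· = p) (i + 1) = 0 :=
    countP_eq_zero fun u hu hup => by rw [hup, hp] at hu; simp at hu
  rw [hsplit, hsplit, hself, countP_singleton hp hk hm]
  have := hbal.countP_readBefore_le p hi
  omega

end Ballot

section Shape

variable {k m : ℕ} {a g : Partition k m}

lemma mem_totalShape_of_le {r₁ c₁ r₂ c₂ r c : ℕ}
    (h₁ : (r₁, c₁) ∈ totalShape k m a g) (h₂ : (r₂, c₂) ∈ totalShape k m a g)
    (hr₁ : r₁ ≤ r) (hr₂ : r ≤ r₂) (hc₁ : c₁ ≤ c) (hc₂ : c ≤ c₂) :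
    (r, c) ∈ totalShape k m a g := by
  obtain ⟨-, ha, -⟩ : r₁ < k ∧ a.part r₁ ≤ c₁ ∧ _ := h₁
  obtain ⟨hk, -, hg⟩ : r₂ < k ∧ _ ∧ c₂ < m - g.part (k - 1 - r₂) := h₂
  have := a.antitone' hr₁
  have := g.antitone' (show k - 1 - r₂ ≤ k - 1 - r by omega)
  show r < k ∧ a.part r ≤ c ∧ c < m - g.part (k - 1 - r)
  omega

lemma lt_of_mem_totalShape {p : Cell} (hp : p ∈ totalShape k m a g) : p.1 < k ∧ p.2 < m := by
  obtain ⟨hk, -, hm⟩ := hp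
  exact ⟨hk, by omega⟩

end Shape

section Swap

variable {k m : ℕ} {x : PState} {q p : Cell} {i v : ℕ}

lemma swapState_T_eq_some (hne : x.box ≠ q) :
    (swapState x q i).T p = some v ↔
      p = x.box ∧ v = i ∨ p ≠ x.box ∧ p ≠ q ∧ x.T p = some v := by
  simp only [swapState]
  by_cases hpb : p = x.box
  · subst hpb; simp [eq_comm]
  · by_cases hpq : p = q
    · subst hpq; simp [hpb]
    · simp [hpb, hpq]

lemma swapState_T_of_ne_box (hp : p ≠ x.box)
    (h : (swapState x q i).T p = some v) : x.T p = some v := by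
  simp only [swapState, Function.update_of_ne hp] at h
  by_cases hpq : p = q
  · subst hpq; simp at h
  · rwa [Function.update_of_ne hpq] at h

open Classical in
lemma countP_swapState (P : Cell → Prop) (v : ℕ) (hb : x.T x.box = none) (hq : x.T q = some i)
    (hbk : x.box.1 < k ∧ x.box.2 < m) (hqk : q.1 < k ∧ q.2 < m) :
    countP k m (swapState x q i).T P v + (if P q ∧ v = i then 1 else 0) =
      countP k m x.T P v + (if P x.box ∧ v = i then 1 else 0) := by
  have hne : x.box ≠ q := by rintro rfl; simp [hb] at hq
  have h₁ := countP_update (T := Function.update x.T q none) (P := P) (v := v)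
    hbk.1 hbk.2 (some i)
  have h₂ := countP_update (T := x.T) (P := P) (v := v) hqk.1 hqk.2 none
  rw [Function.update_of_ne hne, hb] at h₁
  rw [hq] at h₂
  simp only [reduceCtorEq, and_false, if_false, add_zero, Option.some.injEq, @eq_comm _ i v]
    at h₁ h₂
  simp only [swapState]
  split_ifs at h₁ h₂ ⊢ <;> omega

lemma Phase1Move.countP_suffix_le_countP_readBefore (hb : x.T x.box = none)
    (hmove : Phase1Move i x q) (hpq : ¬ (q = p ∨ readBefore p q)) :
    countP k m x.T (fun u => u = p ∨ readBefore p u) i ≤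
      countP k m x.T (fun u => readBefore x.box u) i := by
  obtain ⟨-, -, hnear⟩ := hmove
  refine countP_mono fun u hu hpu => ?_
  rcases readBefore_trichotomy u x.box with rfl | hub | hbu
  · simp [hb] at hu
  · rcases hnear u hu hub with rfl | huq
    · exact absurd hpu hpq
    · rcases hpu with rfl | hpu
      exacts [absurd (Or.inr huq) hpq, absurd (Or.inr (readBefore_trans hpu huq)) hpq]
  · exact hbu

lemma Phase2Move.countP_readBefore_le_countP_suffix (hmove : Phase2Move i x q)
    (hpq : q = p ∨ readBefore p q) :
    countP k m x.T (fun u => readBefore x.box u) i ≤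
      countP k m x.T (fun u => u = p ∨ readBefore p u) i := by
  obtain ⟨-, -, hnear⟩ := hmove
  refine countP_mono fun u hu hbu => ?_
  rcases hnear u hu hbu with rfl | hqu
  · exact hpq
  · rcases hpq with rfl | hpq
    exacts [Or.inr hqu, Or.inr (readBefore_trans hpq hqu)]

open Classical in
lemma Ballot.swapState_of_phase1Move (hbal : Ballot k m x.T) (hb : x.T x.box = none)
    (hbk : x.box.1 < k ∧ x.box.2 < m) (hqk : q.1 < k ∧ q.2 < m) (hmove : Phase1Move i x q)
    (hstrict : 1 < i → phase2Cond k m (i - 1) x) :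
    Ballot k m (swapState x q i).T := by
  obtain ⟨hq, hqb, -⟩ := id hmove
  intro p j hj
  set S : Cell → Prop := fun u => u = p ∨ readBefore p u
  show countP k m (swapState x q i).T S (j + 1) ≤ countP k m (swapState x q i).T S j
  have hSq : S q → S x.box := by
    rintro (rfl | h)
    exacts [Or.inr hqb, Or.inr (readBefore_trans h hqb)]
  have h₀ := countP_swapState S j hb hq hbk hqk
  have h₁ := countP_swapState S (j + 1) hb hq hbk hqk
  have hold : countP k m x.T S (j + 1) ≤ countP k m x.T S j := hbal p j hj
  by_cases hhard : ¬ S q ∧ S x.box ∧ j + 1 = i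
  · obtain ⟨hPq, hPb, rfl⟩ := hhard
    have hA₁ : countP k m x.T S (j + 1) ≤
        countP k m x.T (fun u => readBefore x.box u) (j + 1) :=
      Phase1Move.countP_suffix_le_countP_readBefore hb hmove hPq
    have hA₂ : countP k m x.T (fun u => readBefore x.box u) j ≤ countP k m x.T S j := by
      refine countP_mono fun u _ hbu => ?_
      rcases hPb with h | hpb
      · exact Or.inr (h ▸ hbu)
      · exact Or.inr (readBefore_trans hpb hbu)
    have hlt := hstrict (by omega)
    simp only [phase2Cond, Nat.add_sub_cancel] at hlt
    simp only [hPq, hPb, false_and, true_and, if_false, if_true, add_zero,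
      show j ≠ j + 1 by omega] at h₀ h₁
    omega
  · by_cases hPq : S q
    · simp only [hPq, hSq hPq, true_and] at h₀ h₁
      split_ifs at h₀ h₁ <;> omega
    · by_cases hPb : S x.box
      · simp only [hPq, hPb, true_and, false_and, if_false, add_zero, not_false_eq_true]
          at h₀ h₁ hhard
        split_ifs at h₀ h₁ <;> omega
      · simp only [hPq, hPb, false_and, if_false, add_zero] at h₀ h₁
        omega

open Classical in
lemma Ballot.swapState_of_phase2Move (hbal : Ballot k m x.T) (hb : x.T x.box = none)
    (hbk : x.box.1 < k ∧ x.box.2 < m) (hqk : q.1 < k ∧ q.2 < m) (hmove : Phase2Move i x q)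
    (hcond : phase2Cond k m i x) :
    Ballot k m (swapState x q i).T := by
  obtain ⟨hq, hbq, -⟩ := id hmove
  intro p j hj
  set S : Cell → Prop := fun u => u = p ∨ readBefore p u
  show countP k m (swapState x q i).T S (j + 1) ≤ countP k m (swapState x q i).T S j
  have hSb : S x.box → S q := by
    rintro (rfl | h)
    exacts [Or.inr hbq, Or.inr (readBefore_trans h hbq)]
  have h₀ := countP_swapState S j hb hq hbk hqk
  have h₁ := countP_swapState S (j + 1) hb hq hbk hqk
  have hold : countP k m x.T S (j + 1) ≤ countP k m x.T S j := hbal p j hj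
  by_cases hhard : S q ∧ ¬ S x.box ∧ j = i
  · obtain ⟨hPq, hPb, rfl⟩ := hhard
    have hbp : readBefore x.box p := by
      rcases readBefore_trichotomy x.box p with h | h | h
      exacts [absurd (Or.inl h) hPb, h, absurd (Or.inr h) hPb]
    have hA₁ : countP k m x.T S (j + 1) ≤
        countP k m x.T (fun u => readBefore x.box u) (j + 1) :=
      countP_mono fun u _ hSu => hSu.elim (· ▸ hbp) (readBefore_trans hbp)
    have hA₂ : countP k m x.T (fun u => readBefore x.box u) j ≤ countP k m x.T S j :=
      Phase2Move.countP_readBefore_le_countP_suffix hmove hPq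
    simp only [phase2Cond] at hcond
    simp only [hPq, hPb, false_and, true_and, if_false, if_true, add_zero,
      show j + 1 ≠ j by omega] at h₀ h₁
    omega
  · by_cases hPb : S x.box
    · simp only [hPb, hSb hPb, true_and] at h₀ h₁
      split_ifs at h₀ h₁ <;> omega
    · by_cases hPq : S q
      · simp only [hPq, hPb, true_and, false_and, if_false, add_zero, not_false_eq_true]
          at h₀ h₁ hhard
        split_ifs at h₀ h₁ <;> omega
      · simp only [hPq, hPb, false_and, if_false, add_zero] at h₀ h₁
        omega

end Swap

structure IsPuncturedLR (k m : ℕ) (a g : Partition k m) (x : PState) : Prop where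
  box_mem : x.box ∈ totalShape k m a g
  isSome_iff : ∀ p, (x.T p).isSome ↔ p ∈ totalShape k m a g ∧ p ≠ x.box
  rowsWeak : RowsWeak x.T
  colsStrict : ColsStrict x.T
  ballot : Ballot k m x.T

namespace IsPuncturedLR

variable {k m : ℕ} {a g : Partition k m} {x : PState} {p : Cell} {v : ℕ}

lemma T_box (hx : IsPuncturedLR k m a g x) : x.T x.box = none :=
  Option.not_isSome_iff_eq_none.1 fun h => ((hx.isSome_iff _).1 h).2 rfl

lemma mem_of_eq_some (hx : IsPuncturedLR k m a g x) (h : x.T p = some v) :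
    p ∈ totalShape k m a g :=
  ((hx.isSome_iff p).1 (by simp [h])).1

lemma ne_box_of_eq_some (hx : IsPuncturedLR k m a g x) (h : x.T p = some v) : p ≠ x.box :=
  ((hx.isSome_iff p).1 (by simp [h])).2

lemma exists_eq_some (hx : IsPuncturedLR k m a g x) (hp : p ∈ totalShape k m a g)
    (hne : p ≠ x.box) : ∃ v, x.T p = some v :=
  Option.isSome_iff_exists.1 ((hx.isSome_iff p).2 ⟨hp, hne⟩)

lemma eq_some_east_of_le (hx : IsPuncturedLR k m a g x) {c e : ℕ}
    (hE : ∀ c v, x.box.2 < c → x.T (x.box.1, c) = some v → e ≤ v) (hc : x.box.2 < c)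
    (he : x.T (x.box.1, c) = some e) : x.T (x.box.1, x.box.2 + 1) = some e := by
  have hmem : (x.box.1, x.box.2 + 1) ∈ totalShape k m a g :=
    mem_totalShape_of_le hx.box_mem (hx.mem_of_eq_some he) le_rfl le_rfl (Nat.le_succ _) hc
  obtain ⟨w, hw⟩ := hx.exists_eq_some hmem fun h => by
    have := congrArg Prod.snd h; dsimp only at this; omega
  have h₁ := hE _ w (Nat.lt_succ_self _) hw
  have h₂ := hx.rowsWeak _ _ _ w e hc hw he
  rwa [show w = e by omega] at hw

lemma eq_some_south_of_le (hx : IsPuncturedLR k m a g x) {r s : ℕ}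
    (hS : ∀ r v, x.box.1 < r → x.T (r, x.box.2) = some v → s ≤ v) (hr : x.box.1 < r)
    (hs : x.T (r, x.box.2) = some s) : x.T (x.box.1 + 1, x.box.2) = some s := by
  have hmem : (x.box.1 + 1, x.box.2) ∈ totalShape k m a g :=
    mem_totalShape_of_le hx.box_mem (hx.mem_of_eq_some hs) (Nat.le_succ _) hr le_rfl le_rfl
  obtain ⟨w, hw⟩ := hx.exists_eq_some hmem fun h => by
    have := congrArg Prod.fst h; dsimp only at this; omega
  have h₁ := hS _ w (Nat.lt_succ_self _) hw
  rcases (show x.box.1 + 1 ≤ r from hr).eq_or_lt with h | h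
  · rwa [h]
  · have h₂ := hx.colsStrict _ _ _ w s h hw hs
    omega

lemma eq_succ_of_above {i r c z : ℕ} (hx : IsPuncturedLR k m a g x) (hz : x.T (r, z) = some i)
    (hzc : z ≤ c)
    (hd : x.T (r + 1, c) = some (i + 1)) (hbox : (r + 1, z) ≠ x.box) :
    x.T (r + 1, z) = some (i + 1) := by
  have hmem : (r + 1, z) ∈ totalShape k m a g := mem_totalShape_of_le (hx.mem_of_eq_some hz)
    (hx.mem_of_eq_some hd) (Nat.le_succ r) le_rfl le_rfl hzc
  obtain ⟨w, hw⟩ := hx.exists_eq_some hmem hbox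
  have h₁ := hx.colsStrict r (r + 1) z i w (Nat.lt_succ_self r) hz hw
  have h₂ := hx.rowsWeak (r + 1) z c w (i + 1) hzc hw hd
  rwa [show w = i + 1 by omega] at hw

lemma swapState {q : Cell} {i : ℕ} (hx : IsPuncturedLR k m a g x) (hq : x.T q = some i)
    (hW : ∀ c v, c < x.box.2 → x.T (x.box.1, c) = some v → v ≤ i)
    (hE : ∀ c v, x.box.2 < c → x.T (x.box.1, c) = some v → i ≤ v)
    (hN : ∀ r v, r < x.box.1 → x.T (r, x.box.2) = some v → v < i)
    (hS : ∀ r v, x.box.1 < r → (r, x.box.2) ≠ q → x.T (r, x.box.2) = some v → i < v)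
    (hbal : Ballot k m (swapState x q i).T) :
    IsPuncturedLR k m a g (swapState x q i) := by
  have hne : x.box ≠ q := (hx.ne_box_of_eq_some hq).symm
  have hU := fun p w => swapState_T_eq_some (p := p) (v := w) (i := i) hne
  refine ⟨hx.mem_of_eq_some hq, fun p => ?_, ?_, ?_, hbal⟩
  · simp only [SC.swapState]
    by_cases hpb : p = x.box
    · subst hpb; simp [hne, hx.box_mem]
    · by_cases hpq : p = q
      · subst hpq; simp [hpb]
      · simp [hpb, hpq, hx.isSome_iff p]
  · obtain ⟨⟨br, bc⟩, T⟩ := x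
    dsimp only at *
    intro r c₁ c₂ v₁ v₂ hc h₁ h₂
    rcases (hU _ _).1 h₁ with ⟨hb₁, rfl⟩ | ⟨hb₁, -, hT₁⟩ <;>
      rcases (hU _ _).1 h₂ with ⟨hb₂, rfl⟩ | ⟨hb₂, -, hT₂⟩
    · exact le_rfl
    · obtain ⟨rfl, rfl⟩ := Prod.mk.inj hb₁
      exact hE c₂ v₂ (lt_of_le_of_ne hc fun h => hb₂ (by rw [h])) hT₂
    · obtain ⟨rfl, rfl⟩ := Prod.mk.inj hb₂
      exact hW c₁ v₁ (lt_of_le_of_ne hc fun h => hb₁ (by rw [h])) hT₁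
    · exact hx.rowsWeak r c₁ c₂ v₁ v₂ hc hT₁ hT₂
  · obtain ⟨⟨br, bc⟩, T⟩ := x
    dsimp only at *
    intro r₁ r₂ c v₁ v₂ hr h₁ h₂
    rcases (hU _ _).1 h₁ with ⟨hb₁, rfl⟩ | ⟨hb₁, -, hT₁⟩ <;>
      rcases (hU _ _).1 h₂ with ⟨hb₂, rfl⟩ | ⟨-, hq₂, hT₂⟩
    · exact absurd (Prod.mk.inj (hb₁.trans hb₂.symm)).1 hr.ne
    · obtain ⟨rfl, rfl⟩ := Prod.mk.inj hb₁
      exact hS r₂ v₂ hr hq₂ hT₂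
    · obtain ⟨rfl, rfl⟩ := Prod.mk.inj hb₂
      exact hN r₁ v₁ hr hT₁
    · exact hx.colsStrict r₁ r₂ c v₁ v₂ hr hT₁ hT₂

lemma countP_lt_countP_below {i r c ct : ℕ} (hx : IsPuncturedLR k m a g x)
    (hd : x.T (r + 1, c) = some (i + 1)) (hbox : ∀ z, (r + 1, z) ≠ x.box)
    (hct : ∀ z, x.T (r + 1, z) = some (i + 1) → ct ≤ z) :
    countP k m x.T (fun u => u.1 = r ∧ u.2 < c) i <
      countP k m x.T (fun u => u.1 = r + 1 ∧ ct ≤ u.2) (i + 1) := by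
  let A' : Cell → Prop := fun u => u.1 = r + 1 ∧ ct ≤ u.2 ∧ u.2 < c
  -- each `i` of row `r` left of column `c` sits above an `i + 1` lying in `A'`
  have hinj : countP k m x.T (fun u => u.1 = r ∧ u.2 < c) i ≤ countP k m x.T A' (i + 1) := by
    refine countP_le_of_injOn (fun u => (u.1 + 1, u.2)) (fun ⟨y, z⟩ ⟨hy, hz⟩ hu => ?_)
      fun ⟨_, _⟩ ⟨_, _⟩ _ _ h => by simp only [Prod.mk.injEq] at h ⊢; omega
    obtain rfl : r = y := hy.symm
    have hw := hx.eq_succ_of_above hu hz.le hd (hbox z)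
    exact ⟨⟨rfl, hct z hw, hz⟩, hw, lt_of_mem_totalShape (hx.mem_of_eq_some hw)⟩
  have hdk := lt_of_mem_totalShape (hx.mem_of_eq_some hd)
  have hsplit : countP k m x.T (fun u => u.1 = r + 1 ∧ ct ≤ u.2) (i + 1) =
      countP k m x.T A' (i + 1) + countP k m x.T (fun u => u.1 = r + 1 ∧ c ≤ u.2) (i + 1) :=
    countP_split (fun ⟨y, z⟩ _ => by have := hct c hd; simp only [A']; omega)
      fun ⟨y, z⟩ _ h₁ h₂ => by simp only [A'] at h₁ h₂; omega
  have hone : countP k m x.T (· = (r + 1, c)) (i + 1) ≤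
      countP k m x.T (fun u => u.1 = r + 1 ∧ c ≤ u.2) (i + 1) :=
    countP_mono fun u _ hu => by simp [hu]
  rw [countP_singleton hd hdk.1 hdk.2] at hone
  omega

lemma phase2Cond_of_below_eq_succ {i : ℕ} (hx : IsPuncturedLR k m a g x) (hi : 1 ≤ i)
    (hW : ∀ c v, c < x.box.2 → x.T (x.box.1, c) = some v → v ≤ i)
    (hd : x.T (x.box.1 + 1, x.box.2) = some (i + 1)) : phase2Cond k m i x := by
  obtain ⟨⟨r, c⟩, T⟩ := x
  dsimp only at hW hd ⊢
  have hex : ∃ c', T (r + 1, c') = some (i + 1) := ⟨c, hd⟩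
  set ct := Nat.find hex
  have hct : T (r + 1, ct) = some (i + 1) := Nat.find_spec hex
  have hbal := hx.ballot (r + 1, ct) i hi
  rw [countP_suffix_below_eq hx.T_box, countP_suffix_below_eq hx.T_box] at hbal
  dsimp only at hbal
  show countP k m T (fun u => readBefore (r, c) u) (i + 1) <
    countP k m T (fun u => readBefore (r, c) u) i
  set A : Cell → Prop := fun u => u.1 = r + 1 ∧ ct ≤ u.2
  set B : Cell → Prop := fun u => u.1 = r ∧ u.2 < c
  have hAi : countP k m T A i = 0 := countP_eq_zero fun ⟨y, z⟩ hu ⟨hy, hz⟩ => by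
    obtain rfl : y = r + 1 := hy
    have := hx.rowsWeak (r + 1) ct z (i + 1) i hz hct hu
    omega
  have hBi : countP k m T B (i + 1) = 0 := countP_eq_zero fun ⟨y, z⟩ hu ⟨hy, hz⟩ => by
    obtain rfl : r = y := hy.symm
    have := hW z (i + 1) hz hu
    omega
  have hB : countP k m T B i < countP k m T A (i + 1) :=
    hx.countP_lt_countP_below hd (by simp) fun z hz => Nat.find_min' hex hz
  omega

end IsPuncturedLR

structure BoxBounds (w e n s : ℕ) (x : PState) : Prop where
  west : ∀ c v, c < x.box.2 → x.T (x.box.1, c) = some v → v ≤ w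
  east : ∀ c v, x.box.2 < c → x.T (x.box.1, c) = some v → e ≤ v
  north : ∀ r v, r < x.box.1 → x.T (r, x.box.2) = some v → v ≤ n
  south : ∀ r v, x.box.1 < r → x.T (r, x.box.2) = some v → s ≤ v

def Phase1Inv (k m : ℕ) (a g : Partition k m) (i : ℕ) (x : PState) : Prop :=
  1 ≤ i ∧ IsPuncturedLR k m a g x ∧ BoxBounds (i - 1) i (i - 1) i x ∧
    (1 < i → phase2Cond k m (i - 1) x)

def Phase2Inv (k m : ℕ) (a g : Partition k m) (i : ℕ) (x : PState) : Prop :=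
  1 ≤ i ∧ IsPuncturedLR k m a g x ∧ BoxBounds i i (i - 1) (i + 1) x

section Invariant

variable {k m : ℕ} {a b g : Partition k m} {i : ℕ} {x : PState} {q : Cell}

lemma phase1Inv_one_of_memLR1 (hx : MemLR1 k m a b g x) : Phase1Inv k m a g 1 x := by
  obtain ⟨hbox, hsh, hrw, hcs, hpos, hbal, -, hW, hN⟩ := hx
  have hP : IsPuncturedLR k m a g x := ⟨hbox, hsh, hrw, hcs, hbal⟩
  refine ⟨le_rfl, hP, ⟨fun c v hc hv => ?_, fun c v _ hv => hpos _ v hv,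
    fun r v hr hv => ?_, fun r v _ hv => hpos _ v hv⟩, fun h => absurd h (lt_irrefl 1)⟩
  · obtain ⟨w, hw⟩ := hP.exists_eq_some (mem_totalShape_of_le (hP.mem_of_eq_some hv) hbox
      le_rfl le_rfl (by omega : c ≤ x.box.2 - 1) (Nat.sub_le _ 1))
      fun h => by have := congrArg Prod.snd h; dsimp only at this; omega
    exact (hW (by simp [shapeOf, hw])).elim
  · obtain ⟨w, hw⟩ := hP.exists_eq_some (mem_totalShape_of_le (hP.mem_of_eq_some hv) hbox
      (by omega : r ≤ x.box.1 - 1) (Nat.sub_le _ 1) le_rfl le_rfl)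
      fun h => by have := congrArg Prod.fst h; dsimp only at this; omega
    exact (hN (by simp [shapeOf, hw])).elim

lemma Phase1Inv.phase2Inv (h : Phase1Inv k m a g i x) (hno : ¬ phase1Cond i x) :
    Phase2Inv k m a g i x := by
  obtain ⟨hi, hx, hB, -⟩ := h
  refine ⟨hi, hx, ⟨fun c v hc hv => (hB.west c v hc hv).trans (Nat.sub_le i 1), hB.east,
    hB.north, fun r v hr hv => ?_⟩⟩
  refine lt_of_le_of_ne (hB.south r v hr hv) fun hiv => hno ⟨(r, x.box.2), ?_, Or.inl hr⟩
  rw [hv, hiv]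

lemma Phase2Inv.succ (h : Phase2Inv k m a g i x) (hno : ¬ phase2Cond k m i x) :
    Phase2Inv k m a g (i + 1) x := by
  obtain ⟨hi, hx, hB⟩ := h
  refine ⟨by omega, hx, ⟨fun c v hc hv => (hB.west c v hc hv).trans (Nat.le_succ i),
    fun c v hc hv => ?_, fun r v hr hv => by have := hB.north r v hr hv; omega,
    fun r v hr hv => ?_⟩⟩
  · refine lt_of_le_of_ne (hB.east c v hc hv) fun hiv => hno ?_
    have hd := hx.eq_some_east_of_le hB.east hc (hiv ▸ hv)
    have hdk := lt_of_mem_totalShape (hx.mem_of_eq_some hd)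
    rw [phase2Cond, countP_readBefore_eq_suffix, countP_readBefore_eq_suffix]
    exact hx.ballot.countP_suffix_lt hd hdk.1 hdk.2 hi
  · refine lt_of_le_of_ne (hB.south r v hr hv) fun hiv => hno ?_
    exact hx.phase2Cond_of_below_eq_succ hi hB.west
      (hx.eq_some_south_of_le hB.south hr (hiv ▸ hv))

lemma Phase2Inv.phase2Move (h : Phase2Inv k m a g i x) (hc : phase2Cond k m i x)
    (hmove : Phase2Move i x q) : Phase2Inv k m a g i (swapState x q i) := by
  obtain ⟨hi, hx, hB⟩ := h
  obtain ⟨hq, hbq, -⟩ := id hmove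
  have hU := fun p w => swapState_T_eq_some (p := p) (v := w) (i := i)
    (hx.ne_box_of_eq_some hq).symm
  have hbal := hx.ballot.swapState_of_phase2Move hx.T_box (lt_of_mem_totalShape hx.box_mem)
    (lt_of_mem_totalShape (hx.mem_of_eq_some hq)) hmove hc
  have hx' := hx.swapState hq hB.west hB.east
    (fun r v hr hv => by have := hB.north r v hr hv; omega)
    (fun r v hr _ hv => hB.south r v hr hv) hbal
  refine ⟨hi, hx', ⟨fun c v (hlt : c < q.2) hv => ?_, fun c v (hlt : q.2 < c) hv => ?_,
    fun r v (hlt : r < q.1) hv => ?_, fun r v (hlt : q.1 < r) hv => ?_⟩⟩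
  · rcases (hU _ v).1 hv with ⟨-, rfl⟩ | ⟨-, -, hv⟩
    exacts [le_rfl, hx.rowsWeak _ _ _ _ _ hlt.le hv hq]
  · have hne : (q.1, c) ≠ x.box := by rintro h; simp only [readBefore, ← h] at hbq; omega
    exact hx.rowsWeak _ _ _ _ _ hlt.le hq (swapState_T_of_ne_box hne hv)
  · have hne : (r, q.2) ≠ x.box := by rintro h; simp only [readBefore, ← h] at hbq; omega
    have := hx.colsStrict _ _ _ _ _ hlt (swapState_T_of_ne_box hne hv) hq
    omega
  · rcases (hU _ v).1 hv with ⟨hb, -⟩ | ⟨-, -, hv⟩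
    · -- the old `⊠` lies below `q`, but the entries above it are `< i`
      have := hB.north q.1 i (by rw [← hb]; exact hlt) (by rw [← hb]; exact hq)
      omega
    · exact hx.colsStrict _ _ _ _ _ hlt hq hv

lemma Phase1Inv.box_fst_lt (h : Phase1Inv k m a g i x) (hmove : Phase1Move i x q) :
    x.box.1 < q.1 := by
  obtain ⟨hi, -, hB, -⟩ := h
  obtain ⟨hq, hqb | ⟨hrow, hcol⟩, -⟩ := hmove
  · exact hqb
  · have := hB.west q.2 i hcol (by rw [← hrow]; exact hq)
    omega

lemma Phase1Inv.lt_of_south (h : Phase1Inv k m a g i x) (hmove : Phase1Move i x q) {r v : ℕ}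
    (hr : x.box.1 < r) (hrq : (r, x.box.2) ≠ q) (hv : x.T (r, x.box.2) = some v) : i < v := by
  have hbq := h.box_fst_lt hmove
  obtain ⟨hi, hx, hB, -⟩ := h
  obtain ⟨hq, -, hnear⟩ := hmove
  refine lt_of_le_of_ne (hB.south r v hr hv) ?_
  rintro rfl
  -- an `i` below `⊠` other than `q` precedes `q`; some cell between it, `⊠` and `q` is then
  -- both `≥ i` and `< i`
  rcases hnear _ hv (Or.inl hr) with h | h | ⟨hrow, hcol⟩
  · exact hrq h
  · obtain ⟨w, hw⟩ := hx.exists_eq_some (mem_totalShape_of_le hx.box_mem (hx.mem_of_eq_some hv)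
      hbq.le h.le le_rfl le_rfl) fun h => by have := congrArg Prod.fst h; dsimp only at this; omega
    have h₁ := hB.south q.1 w hbq hw
    have h₂ := hx.colsStrict _ _ _ _ _ h hw hv
    omega
  · dsimp only at hrow hcol
    have hq' : x.T (r, q.2) = some i := by rw [hrow]; exact hq
    obtain ⟨w, hw⟩ := hx.exists_eq_some (mem_totalShape_of_le hx.box_mem
      (hx.mem_of_eq_some hq') le_rfl hr.le hcol.le le_rfl)
      fun h => by have := congrArg Prod.snd h; dsimp only at this; omega
    have h₁ := hB.east q.2 w hcol hw
    have h₂ := hx.colsStrict _ _ _ _ _ hr hw hq'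
    omega

lemma Phase1Inv.phase1Move (h : Phase1Inv k m a g i x) (hmove : Phase1Move i x q) :
    Phase1Inv k m a g (i + 1) (swapState x q i) := by
  have hbq := h.box_fst_lt hmove
  have hS := fun r v => h.lt_of_south hmove (r := r) (v := v)
  obtain ⟨hi, hx, hB, hstrict⟩ := h
  obtain ⟨hq, -, hnear⟩ := id hmove
  have hbk := lt_of_mem_totalShape hx.box_mem
  have hqk := lt_of_mem_totalShape (hx.mem_of_eq_some hq)
  have hbal := hx.ballot.swapState_of_phase1Move hx.T_box hbk hqk hmove hstrict
  have hx' := hx.swapState hq (fun c v hc hv => (hB.west c v hc hv).trans (Nat.sub_le i 1))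
    hB.east (fun r v hr hv => by have := hB.north r v hr hv; omega) hS hbal
  have hrow : ∀ c, (q.1, c) ≠ x.box := fun c h => by
    have := congrArg Prod.fst h; exact hbq.ne' this
  unfold Phase1Inv
  simp only [Nat.add_sub_cancel]
  refine ⟨by omega, hx', ⟨fun c v (hlt : c < q.2) hv => ?_, fun c v (hlt : q.2 < c) hv => ?_,
    fun r v (hlt : r < q.1) hv => ?_, fun r v (hlt : q.1 < r) hv => ?_⟩, fun _ => ?_⟩
  · exact hx.rowsWeak _ _ _ _ _ hlt.le (swapState_T_of_ne_box (hrow c) hv) hq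
  · have hv := swapState_T_of_ne_box (hrow c) hv
    refine lt_of_le_of_ne (hx.rowsWeak _ _ _ _ _ hlt.le hq hv) ?_
    rintro rfl
    rcases hnear _ hv (Or.inl hbq) with h | h <;>
      simp only [readBefore, Prod.ext_iff] at h <;> omega
  · rcases (swapState_T_eq_some (hx.ne_box_of_eq_some hq).symm).1 hv with
      ⟨-, rfl⟩ | ⟨-, -, hv⟩
    exacts [le_rfl, (hx.colsStrict _ _ _ _ _ hlt hv hq).le]
  · have hne : (r, q.2) ≠ x.box := fun h => by
      have := congrArg Prod.fst h; dsimp only at this; omega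
    exact hx.colsStrict _ _ _ _ _ hlt hq (swapState_T_of_ne_box hne hv)
  · have hafter := fun v => countP_swapState (fun u => readBefore q u) v hx.T_box hq hbk hqk
    have h₀ := hafter i
    have h₁ := hafter (i + 1)
    simp only [readBefore_irrefl, show readBefore q x.box from Or.inl hbq, false_and, and_self,
      if_true, if_false, and_false, show i + 1 ≠ i by omega] at h₀ h₁
    have := hx.ballot.countP_readBefore_le q hi
    show countP k m (swapState x q i).T (fun u => readBefore q u) (i + 1) <
      countP k m (swapState x q i).T (fun u => readBefore q u) i
    omega

def EshInv (k m : ℕ) (a g : Partition k m) : ℕ × Bool × PState → Prop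
  | (i, false, x) => Phase1Inv k m a g i x
  | (i, true, x) => Phase2Inv k m a g i x

lemma EshInv.step {lb : ℕ} {s t : ℕ × Bool × PState} (h : EshInv k m a g s)
    (hst : Step k m lb s t) : EshInv k m a g t := by
  cases hst with
  | p1 _ hmove => exact Phase1Inv.phase1Move h hmove
  | p1to2 _ hno => exact Phase1Inv.phase2Inv h hno
  | p2 _ hc hmove => exact Phase2Inv.phase2Move h hc hmove
  | p2inc _ hno => exact Phase2Inv.succ h hno

lemma EshInv.of_reflTransGen {lb : ℕ} {s t : ℕ × Bool × PState} (h : EshInv k m a g s)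
    (hst : Relation.ReflTransGen (Step k m lb) s t) : EshInv k m a g t := by
  induction hst with
  | refl => exact h
  | tail _ hst ih => exact ih.step hst

lemma EshInv.isPuncturedLR {s : ℕ × Bool × PState} (h : EshInv k m a g s) :
    IsPuncturedLR k m a g s.2.2 := by
  obtain ⟨i, _ | _, x⟩ := s
  exacts [h.2.1, h.2.1]

end Invariant

theorem stmt_2_general (k m : ℕ) (a b g : Partition k m)
    (x : PState) (hx : MemLR1 k m a b g x) :
    ∀ (i : ℕ) (ph : Bool) (z : PState),
      Relation.ReflTransGen (Step k m b.length) (1, false, x) (i, ph, z) →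
      RowsWeak z.T ∧ ColsStrict z.T ∧ Ballot k m z.T := by
  intro i ph z h
  have hx₀ : EshInv k m a g (1, false, x) := phase1Inv_one_of_memLR1 hx
  have hz := (hx₀.of_reflTransGen h).isPuncturedLR
  exact ⟨hz.rowsWeak, hz.colsStrict, hz.ballot⟩

/-- Throughout the local evacuation-shuffle algorithm, the
punctured tableau (omitting the box) has weakly increasing rows, strictly
increasing columns, and ballot reading word. -/
theorem stmt_2 (k m : ℕ) (hk : 0 < k) (hm : 0 < m) (a b g : Partition k m)
    (hsz : a.size + b.size + g.size = k * m - 1)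
    (x : PState) (hx : MemLR1 k m a b g x) :
    ∀ (i : ℕ) (ph : Bool) (z : PState),
      Relation.ReflTransGen (Step k m b.length) (1, false, x) (i, ph, z) →
      RowsWeak z.T ∧ ColsStrict z.T ∧ Ballot k m z.T :=
  stmt_2_general k m a b g x hx

end SC
end

section
/- Fix 1 ≤ i ≤ ℓ(β) and T ∈ X_i. If the steps of local-esh exchanging ⊠ with entries equal to i consist of a single Phase 1 vertical slide, or of a (possibly empty) sequence of Phase 2 horizontal slides, then ℓ_i(T) = s_i^{-1}(T); that is, T is a fixed point of s_i ∘ ℓ_i. -/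
/-
Common combinatorial framework for the paper
"Monodromy and K-theory of Schubert curves via generalized jeu de taquin"
(Gillespie–Levinson).

Cells are pairs (row, column), 0-indexed, with row 0 the top row (English
convention).  A skew tableau is modelled as a `Filling`, i.e. a function
`Cell → Option ℕ`; `none` means the cell is not in the (filled part of the)
shape.  A punctured tableau is a filling together with a distinguished empty
cell `box` (the ⊠).
-/

namespace SC

/-!
Since `⊠` lies between the `(i-1)`-st and `i`-th horizontal strips, no `i` sits directly north
or west of it, so `sᵢ` fixes `T`. A vertical Phase 1 slide exchanges `⊠` with the `i` directly
below it, since a cell strictly between them would carry an entry both `≥ i` and `< i`.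
Likewise a run of horizontal Phase 2 slides walks `⊠` through a contiguous run of `i`'s in its
row: each cell it passes is squeezed between `i` on both sides. In either case the inward jeu de
taquin slide `sᵢ` retraces these exchanges exactly, back to `T`.
-/

lemma swapState_T_apply (x : PState) (q : Cell) (v : ℕ) (p : Cell) :
    (swapState x q v).T p = if p = x.box then some v else if p = q then none else x.T p := by
  simp [swapState, Function.update_apply]

@[simp]
lemma swapState_box (x : PState) (q : Cell) (v : ℕ) : (swapState x q v).box = q := rfl

lemma swapState_swapState {x : PState} {q : Cell} {v : ℕ} (hbox : x.T x.box = none)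
    (hq : x.T q = some v) : swapState (swapState x q v) x.box v = x := by
  obtain ⟨c, T⟩ := x
  simp only [swapState, PState.mk.injEq, true_and]
  funext p
  by_cases hpq : p = q <;> by_cases hpc : p = c <;> simp_all

lemma readBefore_asymm {p q : Cell} (hpq : readBefore p q) (hqp : readBefore q p) : False := by
  simp only [readBefore] at hpq hqp
  omega

lemma Phase1Move.unique {i : ℕ} {x : PState} {q q' : Cell} (hq : Phase1Move i x q)
    (hq' : Phase1Move i x q') : q' = q := by
  rcases hq.2.2 q' hq'.1 hq'.2.1 with h | h
  · exact h
  rcases hq'.2.2 q hq.1 hq.2.1 with h' | h'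
  · exact h'.symm
  · exact (readBefore_asymm h h').elim

lemma mem_totalShape_of_between {k m : ℕ} {a g : Partition k m} {p q s : Cell}
    (hp : p ∈ totalShape k m a g) (hq : q ∈ totalShape k m a g)
    (h₁ : p.1 ≤ s.1) (h₁' : s.1 ≤ q.1) (h₂ : p.2 ≤ s.2) (h₂' : s.2 ≤ q.2) :
    s ∈ totalShape k m a g := by
  obtain ⟨-, hpa, -⟩ := hp
  obtain ⟨hqk, -, hqg⟩ := hq
  have ha := a.antitone' h₁
  have hg := g.antitone' (show k - 1 - q.1 ≤ k - 1 - s.1 by omega)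
  exact ⟨by omega, by omega, by omega⟩

lemma BoxBetween.not_siStep {i : ℕ} {x : PState} (hi : 1 ≤ i) (hx : BoxBetween i x)
    (y : PState) : ¬ SiStep i x y := by
  rintro ⟨hstep, hy⟩
  cases hstep with
  | @north r c v hb hv =>
    have hvi : v = i := Option.some.inj (hv.symm.trans hy)
    have := hx.2.2.1 r v (by rw [hb]; omega) (by rw [hb]; exact hv)
    omega
  | @west r c v hb hv =>
    have hvi : v = i := Option.some.inj (hv.symm.trans hy)
    have := hx.1 c v (by rw [hb]; omega) (by rw [hb]; exact hv)
    omega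

namespace XSet

variable {k m : ℕ} {a b g : Partition k m} {i : ℕ} {z : PState}

lemma T_box (hz : z ∈ XSet k m a b g i) : z.T z.box = none :=
  Option.not_isSome_iff_eq_none.mp fun h => ((hz.2.1 z.box).mp h).2 rfl

lemma mem_totalShape (hz : z ∈ XSet k m a b g i) {p : Cell} {v : ℕ} (hp : z.T p = some v) :
    p ∈ totalShape k m a g :=
  ((hz.2.1 p).mp (by simp [hp])).1

lemma exists_T_eq_some (hz : z ∈ XSet k m a b g i) {p : Cell} (hp : p ∈ totalShape k m a g)
    (hne : p ≠ z.box) : ∃ v, z.T p = some v :=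
  Option.isSome_iff_exists.mp ((hz.2.1 p).mpr ⟨hp, hne⟩)

lemma eq_succ_of_T_below (hz : z ∈ XSet k m a b g i) {r : ℕ}
    (hr : z.box.1 < r) (hT : z.T (r, z.box.2) = some i) : r = z.box.1 + 1 := by
  by_contra hne
  obtain ⟨v, hv⟩ := exists_T_eq_some hz (p := (z.box.1 + 1, z.box.2))
    (mem_totalShape_of_between hz.1 (mem_totalShape hz hT) (by simp) (by simp; omega)
      le_rfl le_rfl) (by simp [Prod.ext_iff])
  obtain ⟨-, -, -, hcs, -, -, -, hbb⟩ := hz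
  have hge := hbb.2.2.2 _ v (by simp) hv
  have hlt := hcs _ _ _ v i (by omega) hv hT
  omega

lemma T_eq_of_T_right (hz : z ∈ XSet k m a b g i) {c c' : ℕ}
    (hc : z.box.2 < c) (hcc' : c ≤ c') (hT : z.T (z.box.1, c') = some i) :
    z.T (z.box.1, c) = some i := by
  obtain ⟨v, hv⟩ := exists_T_eq_some hz (p := (z.box.1, c))
    (mem_totalShape_of_between hz.1 (mem_totalShape hz hT) le_rfl le_rfl
      (by simp; omega) hcc') (by simp [Prod.ext_iff]; omega)
  obtain ⟨-, -, hrw, -, -, -, -, hbb⟩ := hz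
  have hge := hbb.2.1 c v hc hv
  have hle := hrw _ _ _ v i hcc' hv hT
  rw [hv, le_antisymm hle hge]

end XSet

section Slides

variable {i n : ℕ} {x : PState}

lemma siStep_swapState_below (hbox : x.T x.box = none)
    (hbelow : x.T (x.box.1 + 1, x.box.2) = some i) (hrw : RowsWeak x.T) :
    SiStep i (swapState x (x.box.1 + 1, x.box.2) i) x := by
  refine ⟨?_, by simp [swapState_T_apply]⟩
  have hstep := InStep.north (x := swapState x (x.box.1 + 1, x.box.2) i)
    (r := x.box.1) (c := x.box.2) (v := i) rfl (by simp [swapState_T_apply]) fun w hw => by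
      rw [swapState_T_apply] at hw
      split_ifs at hw with h₁ h₂
      · simp [Prod.ext_iff] at h₁
      · exact hrw _ _ _ w i (Nat.sub_le _ _) hw hbelow
  rwa [swapState_swapState hbox hbelow] at hstep

def slideRight (i : ℕ) (x : PState) : PState := swapState x (x.box.1, x.box.2 + 1) i

-- The guard `0 < x.box.1` is needed because `0 - 1 = 0` in `ℕ`.
lemma siStep_slideRight (hbox : x.T x.box = none)
    (hright : x.T (x.box.1, x.box.2 + 1) = some i)
    (habove : 0 < x.box.1 → ∀ w, x.T (x.box.1 - 1, x.box.2 + 1) = some w → w < i) :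
    SiStep i (slideRight i x) x := by
  refine ⟨?_, by simp [slideRight, swapState_T_apply]⟩
  have hstep := InStep.west (x := slideRight i x)
    (r := x.box.1) (c := x.box.2) (v := i) rfl (by simp [slideRight, swapState_T_apply])
    fun w hw => by
      simp only [slideRight, swapState_T_apply] at hw
      split_ifs at hw with h₁ h₂
      · simp [Prod.ext_iff] at h₁
      · exact habove (by simp [Prod.ext_iff] at h₂; omega) w hw
  rwa [slideRight, swapState_swapState hbox hright] at hstep

lemma slideRight_iterate_box : ((slideRight i)^[n] x).box = (x.box.1, x.box.2 + n) := by
  induction n with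
  | zero => rfl
  | succ n ih => rw [Function.iterate_succ_apply', slideRight, swapState, ih]; rfl

lemma slideRight_iterate_T_box (hbox : x.T x.box = none) :
    ((slideRight i)^[n] x).T ((slideRight i)^[n] x).box = none := by
  cases n with
  | zero => exact hbox
  | succ n => simp [Function.iterate_succ_apply', slideRight, swapState_T_apply, Prod.ext_iff]

lemma slideRight_iterate_T_of_notMem {p : Cell}
    (hp : p.1 ≠ x.box.1 ∨ p.2 < x.box.2 ∨ x.box.2 + n < p.2) :
    ((slideRight i)^[n] x).T p = x.T p := by
  induction n with
  | zero => rfl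
  | succ n ih =>
    rw [Function.iterate_succ_apply', slideRight, swapState_T_apply, slideRight_iterate_box,
      if_neg (by rintro rfl; omega), if_neg (by rintro rfl; omega), ih (by omega)]

lemma reflTransGen_siStep_slideRight_iterate (hbox : x.T x.box = none) (hcs : ColsStrict x.T)
    (hrow : ∀ j, 0 < j → j ≤ n → x.T (x.box.1, x.box.2 + j) = some i) :
    Relation.ReflTransGen (SiStep i) ((slideRight i)^[n] x) x := by
  induction n with
  | zero => exact .refl
  | succ n ih =>
    have hright : x.T (x.box.1, x.box.2 + (n + 1)) = some i := hrow (n + 1) (by omega) le_rfl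
    rw [Function.iterate_succ_apply']
    refine .head (siStep_slideRight (slideRight_iterate_T_box hbox) ?_ ?_)
      (ih fun j hj hjn => hrow j hj (by omega))
    · rw [slideRight_iterate_box, slideRight_iterate_T_of_notMem (by simp), add_assoc]
      exact hright
    · intro hr w hw
      rw [slideRight_iterate_box] at hr hw
      rw [slideRight_iterate_T_of_notMem (by simp)] at hw
      exact hcs (x.box.1 - 1) x.box.1 _ w i (by omega) hw (by rwa [add_assoc])

end Slides

namespace XSet

variable {k m : ℕ} {a b g : Partition k m} {i n : ℕ} {z : PState}

lemma phase2Move_slideRight_iterate (hz : z ∈ XSet k m a b g i) {q : Cell}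
    (hq : Phase2Move i ((slideRight i)^[n] z) q) (hqrow : q.1 = z.box.1) :
    q = (z.box.1, z.box.2 + n + 1) := by
  obtain ⟨hqT, hafter, hnearest⟩ := hq
  rw [slideRight_iterate_box] at hafter hnearest
  have hqc : z.box.2 + n < q.2 := by simp only [readBefore] at hafter; omega
  rw [slideRight_iterate_T_of_notMem (by omega)] at hqT
  have hnext : z.T (z.box.1, z.box.2 + n + 1) = some i :=
    T_eq_of_T_right hz (c' := q.2) (by omega) (by omega) (by rw [← hqrow]; exact hqT)
  rcases hnearest (z.box.1, z.box.2 + n + 1)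
    (by rwa [slideRight_iterate_T_of_notMem (by simp)]) (by simp [readBefore]) with h | h
  · exact h.symm
  · simp only [readBefore] at h; omega

lemma exists_slideRight_iterate_of_reflTransGen (hz : z ∈ XSet k m a b g i)
    (hhoriz : ∀ u v, Relation.ReflTransGen (P2Step k m i) z u →
      P2Step k m i u v → v.box.1 = u.box.1)
    {w : PState} (hw : Relation.ReflTransGen (P2Step k m i) z w) :
    ∃ n, w = (slideRight i)^[n] z ∧ ∀ j, 0 < j → j ≤ n → z.T (z.box.1, z.box.2 + j) = some i := by
  induction hw with
  | refl => exact ⟨0, rfl, fun j hj hjn => by omega⟩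
  | @tail u v hzu huv ih =>
    obtain ⟨n, rfl, hrow⟩ := ih
    have hrow' := hhoriz _ _ hzu huv
    obtain ⟨-, q, hq, rfl⟩ := huv
    have hqeq := phase2Move_slideRight_iterate hz hq (by simpa [slideRight_iterate_box] using hrow')
    refine ⟨n + 1, ?_, fun j hj hjn => ?_⟩
    · rw [Function.iterate_succ_apply', slideRight, slideRight_iterate_box, hqeq]
    · rcases Nat.lt_or_ge j (n + 1) with hjn' | hjn'
      · exact hrow j hj (by omega)
      · have := hq.1
        rw [hqeq, slideRight_iterate_T_of_notMem (by simp)] at this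
        rwa [show j = n + 1 by omega, ← add_assoc]

end XSet

theorem stmt_15_general (k m : ℕ) (a b g : Partition k m)
    (i : ℕ) (h1 : 1 ≤ i)
    (z : PState) (hz : z ∈ XSet k m a b g i)
    (hcase : (∃ q, Phase1Move i z q ∧ q.2 = z.box.2) ∨
      (¬ phase1Cond i z ∧ ∀ u v, Relation.ReflTransGen (P2Step k m i) z u →
        P2Step k m i u v → v.box.1 = u.box.1)) :
    ∀ w, LiRel k m i z w → SiRun i w z := by
  have ⟨_, _, hrw, hcs, _, _, _, hbb⟩ := hz
  intro w hw
  refine ⟨?_, hbb.not_siStep h1⟩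
  rcases hcase with ⟨q, hq, hqcol⟩ | ⟨hnp1, hhoriz⟩
  · obtain ⟨q', hq', rfl⟩ := hw.resolve_right fun h => h.1 ⟨q, hq.1, hq.2.1⟩
    have hbelow : q = (z.box.1 + 1, z.box.2) := by
      have hrow : z.box.1 < q.1 := by have := hq.2.1; simp only [readBefore] at this; omega
      refine Prod.ext (XSet.eq_succ_of_T_below hz hrow ?_) hqcol
      rw [← hqcol]; exact hq.1
    rw [hq.unique hq', hbelow]
    exact .single (siStep_swapState_below (XSet.T_box hz) (hbelow ▸ hq.1) hrw)
  · obtain ⟨-, hchain, -⟩ := hw.resolve_left fun ⟨q, hq, _⟩ => hnp1 ⟨q, hq.1, hq.2.1⟩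
    obtain ⟨n, rfl, hrow⟩ := XSet.exists_slideRight_iterate_of_reflTransGen hz hhoriz hchain
    exact reflTransGen_siStep_slideRight_iterate (XSet.T_box hz) hcs hrow

/-- If the steps of `local-esh` exchanging `⊠` with entries
equal to `i` consist of a single Phase 1 vertical slide, or a (possibly empty)
sequence of Phase 2 horizontal slides, then `ℓᵢ(T) = sᵢ⁻¹(T)`; that is, `T`
is a fixed point of `sᵢ ∘ ℓᵢ`. -/
theorem stmt_15 (k m : ℕ) (hk : 0 < k) (hm : 0 < m) (a b g : Partition k m)
    (hsz : a.size + b.size + g.size = k * m - 1)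
    (i : ℕ) (h1 : 1 ≤ i) (h2 : i ≤ b.length)
    (z : PState) (hz : z ∈ XSet k m a b g i)
    (hcase : (∃ q, Phase1Move i z q ∧ q.2 = z.box.2) ∨
      (¬ phase1Cond i z ∧ ∀ u v, Relation.ReflTransGen (P2Step k m i) z u →
        P2Step k m i u v → v.box.1 = u.box.1)) :
    ∀ w, LiRel k m i z w → SiRun i w z :=
  stmt_15_general k m a b g i h1 z hz hcase

end SC
end
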